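/- If ψ is a truth-conditional formula of L, then for every formula φ of L the implication φ→ψ is truth-conditional. In particular, every negation ¬φ = φ→⊥ is truth-conditional. -/

import Mathlib

/-- Formulas of the language L: atoms, ⊥, ∧, ∨, →, and inquisitive disjunction ⩾. -/
inductive Formula (P : Type) : Type
  | atom : P → Formula P
  | bot  : Formula P
  | and  : Formula P → Formula P → Formula P
  | or   : Formula P → Formula P → Formula P
  | impl : Formula P → Formula P → Formula P
  | iorr : Formula P → Formula P → Formula P

namespace Formula

/-- Negation ¬φ := φ → ⊥. -/
def neg {P : Type} (φ : Formula P) : Formula P := Formula.impl φ Formula.bot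

/-- Polar question ?φ := φ ⩾ ¬φ. -/
def question {P : Type} (φ : Formula P) : Formula P := Formula.iorr φ φ.neg

/-- A standard formula contains no occurrence of inquisitive disjunction ⩾. -/
def standard {P : Type} : Formula P → Prop
  | atom _ => True
  | bot => True
  | and φ ψ => φ.standard ∧ ψ.standard
  | or φ ψ => φ.standard ∧ ψ.standard
  | impl φ ψ => φ.standard ∧ ψ.standard
  | iorr _ _ => False

end Formula

/-- An intuitionistic Kripke model: a partially ordered set of worlds with a
persistent valuation. -/
structure KripkeModel (P : Type) where
  W : Type
  R : W → W → Prop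
  refl : ∀ w, R w w
  antisymm : ∀ w v, R w v → R v w → w = v
  trans : ∀ w v u, R w v → R v u → R w u
  V : W → P → Prop
  persistent : ∀ w v p, R w v → V w p → V v p

/-- R[t], the up-set generated by a team t. -/
def KripkeModel.upset {P : Type} (M : KripkeModel P) (t : Set M.W) : Set M.W :=
  {v | ∃ w ∈ t, M.R w v}

/-- The support relation M,t ⊨ φ between teams and formulas. -/
def support {P : Type} (M : KripkeModel P) : Formula P → Set M.W → Prop
  | .atom p, t => ∀ w ∈ t, M.V w p
  | .bot, t => t = ∅
  | .and φ ψ, t => support M φ t ∧ support M ψ t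
  | .or φ ψ, t => ∃ t₁ t₂, t = t₁ ∪ t₂ ∧ support M φ t₁ ∧ support M ψ t₂
  | .impl φ ψ, t => ∀ t', t' ⊆ M.upset t → support M φ t' → support M ψ t'
  | .iorr φ ψ, t => support M φ t ∨ support M ψ t

/-- Truth at a world: M,w ⊨ φ iff M,{w} ⊨ φ. -/
def truth {P : Type} (M : KripkeModel P) (w : M.W) (φ : Formula P) : Prop :=
  support M φ {w}

/-- A formula is truth-conditional if support at a team amounts to truth at each world. -/
def truthConditional {P : Type} (φ : Formula P) : Prop :=
  ∀ (M : KripkeModel P) (t : Set M.W), support M φ t ↔ ∀ w ∈ t, truth M w φ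

/-- The partial truth-value function: `tvalIs M w φ b` says T(w,φ) is defined with value b
(b = true for value 1, i.e. M,w ⊨ φ; b = false for value 0, i.e. M,w ⊨ ¬φ). -/
def tvalIs {P : Type} (M : KripkeModel P) (w : M.W) (φ : Formula P) : Bool → Prop
  | true => truth M w φ
  | false => truth M w φ.neg


/- Support is downward closed in the team, so support at a team always yields truth at its
worlds; truth-conditionality is the converse. For `φ → ψ` with `ψ` truth-conditional, a subteam
`t'` of `R[t]` supporting `φ` is checked world by world: each `v ∈ t'` lies above some `w ∈ t`,
and `{v}` is a subteam of `R[{w}]` supporting `φ`, so truth of `φ → ψ` at `w` gives `ψ` at `v`. -/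

theorem support_of_subset {P : Type} {M : KripkeModel P} {φ : Formula P} {s t : Set M.W}
    (hst : s ⊆ t) (h : support M φ t) : support M φ s := by
  induction φ generalizing s t with
  | atom p => exact fun w hw => h w (hst hw)
  | bot => exact Set.subset_eq_empty hst h
  | and φ ψ ihφ ihψ => exact ⟨ihφ hst h.1, ihψ hst h.2⟩
  | or φ ψ ihφ ihψ =>
    obtain ⟨t₁, t₂, rfl, h₁, h₂⟩ := h
    refine ⟨s ∩ t₁, s ∩ t₂, ?_, ihφ Set.inter_subset_right h₁, ihψ Set.inter_subset_right h₂⟩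
    rw [← Set.inter_union_distrib_left, Set.inter_eq_left.mpr hst]
  | impl φ ψ _ _ =>
    intro t' ht' hφ
    refine h t' (fun v hv => ?_) hφ
    obtain ⟨w, hw, hwv⟩ := ht' hv
    exact ⟨w, hst hw, hwv⟩
  | iorr φ ψ ihφ ihψ => exact h.imp (ihφ hst) (ihψ hst)

theorem truth_of_support {P : Type} {M : KripkeModel P} {φ : Formula P} {t : Set M.W}
    (h : support M φ t) {w : M.W} (hw : w ∈ t) : truth M w φ :=
  support_of_subset (Set.singleton_subset_iff.mpr hw) h

theorem truthConditional_of_support_of_forall_truth {P : Type} {φ : Formula P}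
    (h : ∀ (M : KripkeModel P) (t : Set M.W), (∀ w ∈ t, truth M w φ) → support M φ t) :
    truthConditional φ :=
  fun M t => ⟨fun ht _ hw => truth_of_support ht hw, h M t⟩

theorem truthConditional_bot {P : Type} : truthConditional (Formula.bot : Formula P) :=
  truthConditional_of_support_of_forall_truth fun _ _ h =>
    Set.eq_empty_of_forall_notMem fun w hw => Set.singleton_ne_empty w (h w hw)

theorem singleton_subset_upset_singleton {P : Type} {M : KripkeModel P} {w v : M.W}
    (hwv : M.R w v) : {v} ⊆ M.upset {w} :=
  Set.singleton_subset_iff.mpr ⟨w, rfl, hwv⟩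

theorem truthConditional_impl {P : Type} {ψ : Formula P} (hψ : truthConditional ψ)
    (φ : Formula P) : truthConditional (Formula.impl φ ψ) := by
  refine truthConditional_of_support_of_forall_truth fun M _ h t' ht' hφ => ?_
  refine (hψ M t').mpr fun v hv => ?_
  obtain ⟨w, hw, hwv⟩ := ht' hv
  exact h w hw {v} (singleton_subset_upset_singleton hwv) (truth_of_support hφ hv)

/-- if ψ is truth-conditional then so is φ → ψ for every φ;
in particular every negation ¬φ = φ → ⊥ is truth-conditional. -/
theorem impl_truthConditional {P : Type} :
    (∀ ψ : Formula P, truthConditional ψ →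
      ∀ φ : Formula P, truthConditional (Formula.impl φ ψ)) ∧
    (∀ φ : Formula P, truthConditional φ.neg) :=
  ⟨fun _ hψ => truthConditional_impl hψ, truthConditional_impl truthConditional_bot⟩
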